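/- arXiv:1508.03764 — 2 statements merged into one kernel-verified Lean document; each statement's English description precedes it below -/
import Mathlib

section
/- Let A be a finite-dimensional algebra with a generalized H-action for some unital associative algebra H over a field F of characteristic 0. Then the n-th colength satisfies ℓ_n^H(A) ≤ (dim A)·(n+1)^{(dim A)² + dim A} for all n ∈ ℕ. -/
open Filter Finset Submodule

noncomputable section

namespace PIExp

/-- The multiset of leaves (occurrences of generators) of a non-associative word. -/
def mleaves {α : Type} : FreeMagma α → Multiset α
  | .of a => {a}
  | .mul x y => mleaves x + mleaves y

variable (F : Type) [Field F] (S : Type)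

/-- The absolutely free non-associative algebra on `X = {x_1, x_2, …}`
with symbols from `S` (the generator `(i, s)` plays the role of `x_i^s`). -/
abbrev FreeNA : Type := FreeNonUnitalNonAssocAlgebra F (ℕ × S)

/-- A non-associative word in the generators, viewed inside the free algebra. -/
def embedMonomial : FreeMagma (ℕ × S) →ₙ* FreeNA F S :=
  FreeMagma.lift (FreeNonUnitalNonAssocAlgebra.of F)

/-- `Wn F S n` is the space of multilinear elements of degree `n` in `x_0, …, x_{n-1}`:
the span of all words `x_{σ(0)}^{s_0} ⋯ x_{σ(n-1)}^{s_{n-1}}` (all bracket arrangements). -/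
def Wn (n : ℕ) : Submodule F (FreeNA F S) :=
  Submodule.span F
    {f | ∃ w : FreeMagma (ℕ × S), (mleaves w).map Prod.fst = Multiset.range n ∧
      f = embedMonomial F S w}

/-- The substitution `x_i ↦ x_{g i}` (with the symbols untouched),
as an algebra endomorphism of the free algebra. -/
def relabelHom (g : ℕ → ℕ) : FreeNA F S →ₙₐ[F] FreeNA F S :=
  FreeNonUnitalNonAssocAlgebra.lift F
    (fun p : ℕ × S => FreeNonUnitalNonAssocAlgebra.of F (g p.1, p.2))

/-- `relabelHom` as a linear endomorphism. -/
def relabelL (g : ℕ → ℕ) : FreeNA F S →ₗ[F] FreeNA F S where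
  toFun := relabelHom F S g
  map_add' := map_add _
  map_smul' := map_smul _

variable {A : Type} [NonUnitalNonAssocSemiring A] [Module F A]
  [SMulCommClass F A A] [IsScalarTower F A A]

variable (A) in
/-- The ideal of polynomial `H`-identities of an algebra `A` with a generalized `H`-action:
all elements of the free algebra vanishing under every substitution `x_i^h ↦ h • ψ i`. -/
def IdH (H : Type) [Semiring H] [Module H A] : Submodule F (FreeNA F H) :=
  ⨅ ψ : ℕ → A,
    LinearMap.ker ((FreeNonUnitalNonAssocAlgebra.lift F (fun p : ℕ × H => p.2 • ψ p.1) :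
      FreeNA F H →ₙₐ[F] A) : FreeNA F H →ₗ[F] A)

variable (A) in
/-- The ideal of graded polynomial identities of a `T`-graded algebra
`A = ⊕_t comp t`: elements vanishing under all graded substitutions `x_i^{(t)} ↦ ψ (i,t) ∈ comp t`. -/
def IdGr (T : Type) (comp : T → Submodule F A) : Submodule F (FreeNA F T) :=
  ⨅ ψ : {ψ : ℕ × T → A // ∀ p, ψ p ∈ comp p.2},
    LinearMap.ker ((FreeNonUnitalNonAssocAlgebra.lift F (fun p : ℕ × T => ψ.1 p) :
      FreeNA F T →ₙₐ[F] A) : FreeNA F T →ₗ[F] A)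

variable (A) in
/-- The ideal of ordinary polynomial identities of `A` (the symbols are trivial). -/
def IdOrd : Submodule F (FreeNA F Unit) :=
  ⨅ ψ : ℕ → A,
    LinearMap.ker ((FreeNonUnitalNonAssocAlgebra.lift F (fun p : ℕ × Unit => ψ p.1) :
      FreeNA F Unit →ₙₐ[F] A) : FreeNA F Unit →ₗ[F] A)

/-- The `n`-th codimension attached to an ideal of identities `I`:
`dim (W_n / (W_n ∩ I))`, computed as the image of `W_n` in the quotient by `I`. -/
def codim (I : Submodule F (FreeNA F S)) (n : ℕ) : ℕ :=
  Module.finrank F ((Wn F S n).map I.mkQ)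

/-- The `n`-th codimension as a cardinal (for possibly infinite-dimensional situations). -/
def codimRank (I : Submodule F (FreeNA F S)) (n : ℕ) : Cardinal :=
  Module.rank F ((Wn F S n).map I.mkQ)

end PIExp
namespace PIExp

/-- The parts of a partition `p ⊢ n`, listed in non-increasing order:
`partFn p 0 = λ_1`, `partFn p 1 = λ_2`, … (`0` beyond the number of parts). -/
def partFn {n : ℕ} (p : Nat.Partition n) : ℕ → ℕ :=
  fun i => ((p.parts.sort (· ≤ ·)).reverse).getD i 0

/-- The cell (row, column) of the `k`-th box (0-indexed) in the canonical
row-by-row filling of the Young diagram with row lengths `lam`. -/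
def cellOf (lam : ℕ → ℕ) : ℕ → ℕ × ℕ
  | 0 => (0, 0)
  | k + 1 =>
      let c := cellOf lam k
      if c.2 + 1 < lam c.1 then (c.1, c.2 + 1) else (c.1 + 1, 0)

/-- The canonical Young tableau of shape `p`: the cell of each of the numbers `0, …, n-1`. -/
def canonT {n : ℕ} (p : Nat.Partition n) : Fin n → ℕ × ℕ :=
  fun m => cellOf (partFn p) (m : ℕ)

/-- A permutation of `Fin n` viewed as a map `ℕ → ℕ`. -/
def permNat {n : ℕ} (σ : Equiv.Perm (Fin n)) : ℕ → ℕ :=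
  fun i => if h : i < n then (σ ⟨i, h⟩ : ℕ) else i

/-- The row stabilizer `R_{T}` of a tableau `T` (given by the cell of each number). -/
def rowStab {n : ℕ} (Tb : Fin n → ℕ × ℕ) : Finset (Equiv.Perm (Fin n)) :=
  Finset.univ.filter fun π => ∀ m, (Tb (π m)).1 = (Tb m).1

/-- The column stabilizer `C_{T}` of a tableau `T`. -/
def colStab {n : ℕ} (Tb : Fin n → ℕ × ℕ) : Finset (Equiv.Perm (Fin n)) :=
  Finset.univ.filter fun π => ∀ m, (Tb (π m)).2 = (Tb m).2

variable (F : Type) [Field F] (S : Type)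

/-- The Young symmetrizer `e_T = a_T b_T = Σ_{π ∈ R_T} Σ_{σ ∈ C_T} (sign σ) πσ`, acting on the
free algebra by permutation of the variables. -/
def youngE {n : ℕ} (Tb : Fin n → ℕ × ℕ) : FreeNA F S →ₗ[F] FreeNA F S :=
  ∑ π ∈ rowStab Tb, ∑ σ ∈ colStab Tb,
    ((Equiv.Perm.sign σ : ℤ) : F) • relabelL F S (permNat (π * σ))

/-- The Young symmetrizer `e*_T = b_T a_T = Σ_{σ ∈ C_T} Σ_{π ∈ R_T} (sign σ) σπ`. -/
def youngEStar {n : ℕ} (Tb : Fin n → ℕ × ℕ) : FreeNA F S →ₗ[F] FreeNA F S :=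
  ∑ σ ∈ colStab Tb, ∑ π ∈ rowStab Tb,
    ((Equiv.Perm.sign σ : ℤ) : F) • relabelL F S (permNat (σ * π))

/-- The multiplicity `m(A, H, λ)` of the irreducible `S_n`-character `χ(λ)` in the `n`-th
cocharacter attached to the ideal of identities `I`; it equals
`dim e_{T_λ}·(W_n/(W_n ∩ I))`, computed here via the canonical tableau of shape `λ`. -/
def mult (I : Submodule F (FreeNA F S)) {n : ℕ} (p : Nat.Partition n) : ℕ :=
  Module.finrank F (((Wn F S n).map (youngE F S (canonT p))).map I.mkQ)

/-- The `n`-th colength `ℓ_n = Σ_{λ ⊢ n} m(A, H, λ)` attached to an ideal of identities `I`. -/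
def colength (I : Submodule F (FreeNA F S)) (n : ℕ) : ℕ :=
  ∑ p : Nat.Partition n, mult F S I p

/-- The function `Φ(x_1, …, x_s) = 1 / (x_1^{x_1} ⋯ x_s^{x_s})` (with `0^0 = 1`). -/
def Phi (s : ℕ) (x : Fin s → ℝ) : ℝ :=
  (∏ i, Real.rpow (x i) (x i))⁻¹

/-- `max { Φ(λ_1/n, …, λ_s/n) : λ ⊢ n, m(A,H,λ) ≠ 0 }`. -/
def maxPhi (s : ℕ) (I : Submodule F (FreeNA F S)) (n : ℕ) : ℝ :=
  sSup {r : ℝ | ∃ p : Nat.Partition n, mult F S I p ≠ 0 ∧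
    r = Phi s (fun i => (partFn p (i : ℕ) : ℝ) / (n : ℝ))}

/-- `d(A) = limsup_n max { Φ(λ_1/n, …, λ_s/n) : λ ⊢ n, m(A,H,λ) ≠ 0 }`. -/
def dVal (s : ℕ) (I : Submodule F (FreeNA F S)) : ℝ :=
  Filter.limsup (fun n : ℕ => maxPhi F S s I n) Filter.atTop

end PIExp
namespace PIExp

/-- `A` is an algebra with a generalized `H`-action: for every `h ∈ H` there exist
`h'_i, h''_i, h'''_i, h''''_i ∈ H` with
`h(ab) = Σ_i ((h'_i a)(h''_i b) + (h'''_i b)(h''''_i a))` for all `a, b ∈ A`. -/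
def IsGenAction (H A : Type) [Semiring H] [NonUnitalNonAssocSemiring A] [Module H A] : Prop :=
  ∀ h : H, ∃ (k : ℕ) (h₁ h₂ h₃ h₄ : Fin k → H), ∀ a b : A,
    h • (a * b) = ∑ i : Fin k, ((h₁ i • a) * (h₂ i • b) + (h₃ i • b) * (h₄ i • a))

/-- `A` is `H`-simple: `A² ≠ 0` and `A` has no `H`-invariant two-sided ideals
other than `0` and `A`. -/
def IsHSimple (F H A : Type) [Field F] [Semiring H] [NonUnitalNonAssocSemiring A]
    [Module F A] [Module H A] : Prop :=
  (∃ a b : A, a * b ≠ 0) ∧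
    ∀ I : Submodule F A,
      (∀ a : A, ∀ x ∈ I, a * x ∈ I) → (∀ a : A, ∀ x ∈ I, x * a ∈ I) →
      (∀ h : H, ∀ x ∈ I, h • x ∈ I) → I = ⊥ ∨ I = ⊤

/-- `comp : T → Submodule F A` is a grading of `A` by the set `T`:
`A = ⊕_{t ∈ T} A^{(t)}` and for all `s, t` there is `r` with `A^{(s)} A^{(t)} ⊆ A^{(r)}`. -/
def IsGrading (F T A : Type) [Field F] [NonUnitalNonAssocSemiring A] [Module F A]
    (comp : T → Submodule F A) : Prop :=
  iSupIndep comp ∧ (⨆ t, comp t) = ⊤ ∧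
    ∀ s t : T, ∃ r : T, ∀ a ∈ comp s, ∀ b ∈ comp t, a * b ∈ comp r

/-- A graded algebra is graded-simple: `A² ≠ 0` and the only graded two-sided ideals
are `0` and `A`. -/
def IsGradedSimple (F T A : Type) [Field F] [NonUnitalNonAssocSemiring A] [Module F A]
    (comp : T → Submodule F A) : Prop :=
  (∃ a b : A, a * b ≠ 0) ∧
    ∀ I : Submodule F A,
      (∀ a : A, ∀ x ∈ I, a * x ∈ I) → (∀ a : A, ∀ x ∈ I, x * a ∈ I) →
      (I = ⨆ t, I ⊓ comp t) → I = ⊥ ∨ I = ⊤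

end PIExp


/-! Modulo `H`-identities, a multilinear `H`-polynomial of degree `n` is the multilinear function
`Aⁿ → A` it induces. For `e_{T_λ} g = a_{T_λ} b_{T_λ} g` this function is invariant under the row
stabilizer and is a sum of functions alternating along the columns of `T_λ`. These vanish as soon
as the first column is longer than `d = dim A`, so only the at most `(n+1)^d` partitions with at
most `d` parts contribute. For those, on tuples of basis vectors, row invariance makes the function
depend only on how many entries of each row carry each basis vector: at most `(n+1)^{d²}` values
in `A`, hence `m(A,H,λ) ≤ d (n+1)^{d²}`. -/

namespace PIExp

section LinearAlgebra

open Module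

lemma finrank_map_eq_of_forall_eq_zero_iff {K M N P : Type*} [Ring K] [AddCommGroup M]
    [Module K M] [AddCommGroup N] [Module K N] [AddCommGroup P] [Module K P]
    {S : Submodule K M} {f : M →ₗ[K] N} {g : M →ₗ[K] P} (h : ∀ x ∈ S, f x = 0 ↔ g x = 0) :
    finrank K (S.map f) = finrank K (S.map g) := by
  have hker : LinearMap.ker (f ∘ₗ S.subtype) = LinearMap.ker (g ∘ₗ S.subtype) := by
    ext x
    exact h x x.2
  calc finrank K (S.map f) = finrank K (LinearMap.range (f ∘ₗ S.subtype)) := by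
        rw [LinearMap.range_comp, Submodule.range_subtype]
    _ = finrank K (S ⧸ LinearMap.ker (f ∘ₗ S.subtype)) :=
        (LinearMap.quotKerEquivRange _).finrank_eq.symm
    _ = finrank K (S ⧸ LinearMap.ker (g ∘ₗ S.subtype)) :=
        (Submodule.quotEquivOfEq _ _ hker).finrank_eq
    _ = finrank K (LinearMap.range (g ∘ₗ S.subtype)) := (LinearMap.quotKerEquivRange _).finrank_eq
    _ = finrank K (S.map g) := by rw [LinearMap.range_comp, Submodule.range_subtype]

open Equiv in
/-- Left multiplication by the transposition pairs off the terms with opposite signs. -/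
lemma sum_sign_smul_eq_zero_of_swap {ι R W : Type*} [Fintype ι] [DecidableEq ι] [Ring R]
    [AddCommGroup W] [Module R W] {K : Finset (Perm ι)} {a b : ι} (hab : a ≠ b)
    (hK : ∀ σ ∈ K, swap a b * σ ∈ K) (φ : Perm ι → W) (hφ : ∀ σ, φ (swap a b * σ) = φ σ) :
    ∑ σ ∈ K, ((Perm.sign σ : ℤ) : R) • φ σ = 0 := by
  refine Finset.sum_involution (fun σ _ => swap a b * σ) (fun σ _ => ?_) (fun σ _ _ h => ?_) hK
    fun σ _ => by simp [← mul_assoc]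
  · rw [hφ, Perm.sign_mul, Perm.sign_swap hab]
    simp
  · exact hab (swap_eq_one_iff.mp (mul_right_cancel (h.trans (one_mul σ).symm)))

open Equiv in
/-- By pigeonhole two positions of `C` carry the same basis vector, so the alternated map vanishes
on tuples of basis vectors. -/
lemma sum_sign_smul_multilinearMap_eq_zero {ι κ R V W : Type*} [Fintype ι] [DecidableEq ι]
    [Fintype κ] [CommRing R] [AddCommGroup V] [Module R V] [AddCommGroup W] [Module R W]
    (M : MultilinearMap R (fun _ : ι => V) W) (bas : Basis κ R V) {K : Finset (Perm ι)}
    {C : Finset ι} (hC : Fintype.card κ < C.card)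
    (hK : ∀ a ∈ C, ∀ b ∈ C, ∀ σ ∈ K, swap a b * σ ∈ K) (u : ι → V) :
    ∑ σ ∈ K, ((Perm.sign σ : ℤ) : R) • M (u ∘ σ) = 0 := by
  set Malt := ∑ σ ∈ K, ((Perm.sign σ : ℤ) : R) • M.domDomCongr σ
  have hMalt (v : ι → V) : Malt v = ∑ σ ∈ K, ((Perm.sign σ : ℤ) : R) • M (v ∘ σ) := by
    simp only [Malt, FunLike.coe_sum, Finset.sum_apply, FunLike.coe_smul, Pi.smul_apply,
      MultilinearMap.domDomCongr_apply, Function.comp_def]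
  suffices Malt = 0 by rw [← hMalt, this, zero_apply]
  refine Basis.ext_multilinear (fun _ => bas) fun c => ?_
  obtain ⟨a, ha, b, hb, hab, hc⟩ :=
    Finset.exists_ne_map_eq_of_card_lt_of_maps_to (t := Finset.univ) (f := c)
      (by simpa using hC) fun _ _ => Finset.mem_coe.mpr (Finset.mem_univ _)
  rw [hMalt, zero_apply]
  refine sum_sign_smul_eq_zero_of_swap hab (hK a ha b hb) (fun σ => M fun i => bas (c (σ i)))
    fun σ => congrArg M (funext fun i => ?_)
  simp only [Function.comp_apply, Perm.coe_mul, swap_apply_def]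
  split_ifs <;> simp_all

def fiberCard {α β : Type*} [Fintype α] [DecidableEq β] (g : α → β) (b : β) :
    Fin (Fintype.card α + 1) :=
  ⟨#{a | g a = b}, Nat.lt_succ_of_le (Finset.card_le_univ _)⟩

lemma exists_perm_comp_eq_of_fiberCard_eq {α β : Type*} [Fintype α] [DecidableEq α]
    [DecidableEq β] {f g : α → β} (h : fiberCard f = fiberCard g) :
    ∃ ρ : Equiv.Perm α, f ∘ ρ = g := by
  have hcard (b : β) : Fintype.card {a // g a = b} = Fintype.card {a // f a = b} := by
    simpa [Fintype.card_subtype, fiberCard, Fin.ext_iff] using (congrFun h b).symm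
  let e (b : β) : {a // g a = b} ≃ {a // f a = b} := Fintype.equivOfCardEq (hcard b)
  refine ⟨(Equiv.sigmaFiberEquiv g).symm.trans
    ((Equiv.sigmaCongrRight e).trans (Equiv.sigmaFiberEquiv f)), funext fun a => ?_⟩
  exact (e (g a) ⟨a, rfl⟩).2

lemma mem_range_funLeft_fiberCard {α β γ R W : Type*} [Fintype α] [DecidableEq α]
    [DecidableEq β] [DecidableEq γ] [Semiring R] [AddCommMonoid W] [Module R W] (r : α → β)
    {κ : (α → γ) → W} (hκ : ∀ ρ : Equiv.Perm α, r ∘ ρ = r → ∀ c, κ (c ∘ ρ) = κ c) :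
    κ ∈ LinearMap.range (LinearMap.funLeft R W fun c : α → γ => fiberCard fun a => (r a, c a)) := by
  have hfactor : κ.FactorsThrough fun c : α → γ => fiberCard fun a => (r a, c a) := by
    intro c c' h
    obtain ⟨ρ, hρ⟩ := exists_perm_comp_eq_of_fiberCard_eq h
    have hr : r ∘ ρ = r := funext fun a => congrArg Prod.fst (congrFun hρ a)
    have hc : c ∘ ρ = c' := funext fun a => congrArg Prod.snd (congrFun hρ a)
    rw [← hc, hκ ρ hr]
  exact ⟨Function.extend _ κ 0, funext fun c => hfactor.extend_apply 0 c⟩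

/-- Restriction to tuples of basis vectors embeds `T` into the functions of the fibre counts of
`(r, ·)`. -/
lemma finrank_le_of_multilinear_of_invariant {α β K V W : Type*} [Fintype α] [DecidableEq α]
    [Fintype β] [DecidableEq β] [Field K] [AddCommGroup V] [Module K V] [FiniteDimensional K V]
    [AddCommGroup W] [Module K W] [FiniteDimensional K W]
    (r : α → β) (T : Submodule K ((α → V) → W))
    (hmult : ∀ G ∈ T, ∃ M : MultilinearMap K (fun _ : α => V) W, ⇑M = G)
    (hinv : ∀ G ∈ T, ∀ ρ : Equiv.Perm α, r ∘ ρ = r → ∀ v, G (v ∘ ρ) = G v) :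
    finrank K T ≤ (Fintype.card α + 1) ^ (Fintype.card β * finrank K V) * finrank K W := by
  set bas := finBasis K V
  set count := LinearMap.funLeft K W fun c : α → Fin (finrank K V) =>
    fiberCard fun a => (r a, c a)
  set restrict := LinearMap.funLeft K W fun (c : α → Fin (finrank K V)) (a : α) => bas (c a)
  have hrestrict (G : T) : restrict G ∈ LinearMap.range count :=
    mem_range_funLeft_fiberCard r fun ρ hρ c => hinv G G.2 ρ hρ fun a => bas (c a)
  have hinj : Function.Injective ((restrict ∘ₗ T.subtype).codRestrict _ hrestrict) := by
    refine (injective_iff_map_eq_zero _).mpr fun G hG => ?_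
    obtain ⟨M, hM⟩ := hmult G G.2
    have hM0 : M = 0 := Basis.ext_multilinear (fun _ => bas) fun c =>
      (congrFun hM _).trans (congrFun (congrArg Subtype.val hG) c)
    exact Subtype.ext (by simp [← hM, hM0])
  calc finrank K T ≤ finrank K (LinearMap.range count) :=
        LinearMap.finrank_le_finrank_of_injective hinj
    _ ≤ finrank K ((β × Fin (finrank K V) → Fin (Fintype.card α + 1)) → W) :=
        LinearMap.finrank_range_le count
    _ = (Fintype.card α + 1) ^ (Fintype.card β * finrank K V) * finrank K W := by
        simp [Module.finrank_pi_fintype]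

end LinearAlgebra

section Cells

lemma sum_range_mono (lam : ℕ → ℕ) : Monotone fun r => ∑ i ∈ Finset.range r, lam i :=
  fun _ _ h => Finset.sum_le_sum_of_subset (Finset.range_subset_range.mpr h)

variable {lam : ℕ → ℕ} {k : ℕ}

lemma eq_of_sum_range_le_lt {a b m : ℕ}
    (ha : ∑ i ∈ Finset.range a, lam i ≤ m) (ha' : m < ∑ i ∈ Finset.range (a + 1), lam i)
    (hb : ∑ i ∈ Finset.range b, lam i ≤ m) (hb' : m < ∑ i ∈ Finset.range (b + 1), lam i) :
    a = b := by
  by_contra hne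
  rcases Nat.lt_or_gt_of_ne hne with h | h
  · exact absurd (ha'.trans_le (sum_range_mono lam h)) hb.not_gt
  · exact absurd (hb'.trans_le (sum_range_mono lam h)) ha.not_gt

lemma cellOf_spec (hpos : ∀ i < k, 0 < lam i) {m : ℕ} (hm : m < ∑ i ∈ Finset.range k, lam i) :
    (cellOf lam m).2 < lam (cellOf lam m).1 ∧
      ∑ i ∈ Finset.range (cellOf lam m).1, lam i + (cellOf lam m).2 = m := by
  induction m with
  | zero =>
    have hk : 0 < k := Nat.pos_of_ne_zero fun h => by simp [h] at hm
    simpa [cellOf] using hpos 0 hk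
  | succ m ih =>
    obtain ⟨hlt, hsum⟩ := ih (by omega)
    simp only [cellOf]
    split_ifs with hnext
    · exact ⟨hnext, by dsimp only; omega⟩
    · have hrow : ∑ i ∈ Finset.range ((cellOf lam m).1 + 1), lam i = m + 1 := by
        rw [Finset.sum_range_succ]; omega
      refine ⟨hpos _ ?_, by simpa using hrow⟩
      by_contra hge
      exact absurd (hm.trans_le (hrow ▸ sum_range_mono lam (not_lt.mp hge))) (lt_irrefl _)

lemma cellOf_fst_lt (hpos : ∀ i < k, 0 < lam i) {m : ℕ}
    (hm : m < ∑ i ∈ Finset.range k, lam i) : (cellOf lam m).1 < k := by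
  by_contra hge
  have hle : ∑ i ∈ Finset.range k, lam i ≤ ∑ i ∈ Finset.range (cellOf lam m).1, lam i :=
    sum_range_mono lam (not_lt.mp hge)
  have hsum := (cellOf_spec hpos hm).2
  omega

lemma sum_range_lt_sum_range_succ (hpos : ∀ i < k, 0 < lam i) {r : ℕ} (hr : r < k) :
    ∑ i ∈ Finset.range r, lam i < ∑ i ∈ Finset.range (r + 1), lam i := by
  rw [Finset.sum_range_succ]
  exact Nat.lt_add_of_pos_right (hpos r hr)

lemma cellOf_sum_range (hpos : ∀ i < k, 0 < lam i) {r : ℕ} (hr : r < k) :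
    cellOf lam (∑ i ∈ Finset.range r, lam i) = (r, 0) := by
  have hstep := sum_range_lt_sum_range_succ hpos hr
  obtain ⟨hlt, hsum⟩ := cellOf_spec hpos (hstep.trans_le (sum_range_mono lam hr))
  have hfst : (cellOf lam (∑ i ∈ Finset.range r, lam i)).1 = r :=
    eq_of_sum_range_le_lt (by omega) (by rw [Finset.sum_range_succ]; omega) le_rfl hstep
  rw [hfst] at hsum
  exact Prod.ext hfst (by omega)

end Cells

lemma list_eq_of_forall_getD_eq {L L' : List ℕ} (h0 : 0 ∉ L) (h0' : 0 ∉ L')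
    (h : ∀ i, L.getD i 0 = L'.getD i 0) : L = L' := by
  refine List.ext_getElem? fun i => ?_
  have hi := h i
  simp only [List.getD_eq_getElem?_getD] at hi
  cases hL : L[i]? <;> cases hL' : L'[i]? <;> simp only [hL, hL', Option.getD_some,
    Option.getD_none] at hi ⊢
  · exact absurd (hi ▸ List.mem_of_getElem? hL') h0'
  · exact absurd (hi.symm ▸ List.mem_of_getElem? hL) h0
  · rw [hi]

section Partitions

variable {n : ℕ} (p : Nat.Partition n)

def numParts : ℕ := Multiset.card p.parts

def partList : List ℕ := (p.parts.sort (· ≤ ·)).reverse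

lemma partFn_apply (i : ℕ) : partFn p i = (partList p).getD i 0 := rfl

lemma coe_partList : (partList p : Multiset ℕ) = p.parts := by
  rw [partList, Multiset.coe_reverse, Multiset.sort_eq]

lemma mem_partList {a : ℕ} : a ∈ partList p ↔ a ∈ p.parts := by
  rw [← Multiset.mem_coe, coe_partList]

lemma length_partList : (partList p).length = numParts p := by
  rw [← Multiset.coe_card, coe_partList, numParts]

lemma partFn_pos {i : ℕ} (hi : i < numParts p) : 0 < partFn p i := by
  rw [← length_partList] at hi
  rw [partFn_apply, List.getD_eq_getElem _ _ hi]
  exact p.parts_pos ((mem_partList p).mp (List.getElem_mem hi))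

lemma partFn_eq_zero {i : ℕ} (hi : numParts p ≤ i) : partFn p i = 0 := by
  rw [← length_partList] at hi
  rw [partFn_apply, List.getD_eq_default _ _ hi]

lemma partFn_le (i : ℕ) : partFn p i ≤ n := by
  rcases lt_or_ge i (numParts p) with hi | hi
  · rw [← length_partList] at hi
    rw [partFn_apply, List.getD_eq_getElem _ _ hi]
    exact Nat.Partition.le_of_mem_parts ((mem_partList p).mp (List.getElem_mem hi))
  · simp [partFn_eq_zero p hi]

lemma sum_range_partFn : ∑ i ∈ Finset.range (numParts p), partFn p i = n := by
  calc ∑ i ∈ Finset.range (numParts p), partFn p i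
      = ∑ i : Fin (partList p).length, (partList p)[(i : ℕ)] := by
        rw [← length_partList, Finset.sum_range]
        exact Finset.sum_congr rfl fun i _ => List.getD_eq_getElem _ _ i.isLt
    _ = n := by rw [Fin.sum_univ_getElem, ← Multiset.sum_coe, coe_partList, p.parts_sum]

lemma partFn_injective : Function.Injective (partFn (n := n)) := by
  intro p q h
  have h0 (p : Nat.Partition n) : 0 ∉ partList p := fun h0 =>
    (p.parts_pos ((mem_partList p).mp h0)).ne rfl
  apply Nat.Partition.ext
  rw [← coe_partList p, ← coe_partList q, list_eq_of_forall_getD_eq (h0 p) (h0 q) (congrFun h)]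

lemma canonT_fst_lt (m : Fin n) : (canonT p m).1 < numParts p :=
  cellOf_fst_lt (fun _ => partFn_pos p) (by rw [sum_range_partFn]; exact m.isLt)

lemma numParts_le_card_canonT_snd_eq_zero :
    numParts p ≤ #{m : Fin n | (canonT p m).2 = 0} := by
  have hpos : ∀ i < numParts p, 0 < partFn p i := fun _ => partFn_pos p
  have hsurj : Set.SurjOn (fun m : Fin n => (canonT p m).1)
      ({m : Fin n | (canonT p m).2 = 0} : Finset (Fin n)) (Finset.range (numParts p)) := by
    intro r hr
    rw [Finset.coe_range, Set.mem_Iio] at hr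
    have hlt : ∑ i ∈ Finset.range r, partFn p i < n := by
      calc ∑ i ∈ Finset.range r, partFn p i < ∑ i ∈ Finset.range (r + 1), partFn p i :=
            sum_range_lt_sum_range_succ hpos hr
        _ ≤ ∑ i ∈ Finset.range (numParts p), partFn p i := sum_range_mono _ hr
        _ = n := sum_range_partFn p
    have hcell : canonT p ⟨_, hlt⟩ = (r, 0) := cellOf_sum_range hpos hr
    exact ⟨⟨_, hlt⟩, by simp [hcell], by simp [hcell]⟩
  simpa using Finset.card_le_card_of_surjOn _ hsurj

lemma card_filter_numParts_le (n d : ℕ) :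
    #{p : Nat.Partition n | numParts p ≤ d} ≤ (n + 1) ^ d := by
  let f (p : Nat.Partition n) (i : Fin d) : Fin (n + 1) :=
    ⟨partFn p i, Nat.lt_succ_of_le (partFn_le p i)⟩
  have hinj : Set.InjOn f ({p | numParts p ≤ d} : Finset (Nat.Partition n)) := by
    intro p hp q hq h
    simp only [Finset.coe_filter, Finset.mem_univ, true_and, Set.mem_ofPred_eq] at hp hq
    refine partFn_injective (funext fun i => ?_)
    rcases lt_or_ge i d with hi | hi
    · exact congrArg Fin.val (congrFun h ⟨i, hi⟩)
    · rw [partFn_eq_zero p (hp.trans hi), partFn_eq_zero q (hq.trans hi)]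
  calc #{p : Nat.Partition n | numParts p ≤ d} ≤ #(Finset.univ : Finset (Fin d → Fin (n + 1))) :=
        Finset.card_le_card_of_injOn f (fun _ _ => Finset.mem_coe.mpr (Finset.mem_univ _)) hinj
    _ = (n + 1) ^ d := by simp

end Partitions

section Evaluation

variable {F : Type} [Field F] {H : Type} [Semiring H]
  {A : Type} [NonUnitalNonAssocSemiring A] [Module F A] [SMulCommClass F A A]
  [IsScalarTower F A A] [Module H A]

variable (F) in
def evalH (ψ : ℕ → A) : FreeNA F H →ₙₐ[F] A :=
  FreeNonUnitalNonAssocAlgebra.lift F fun q : ℕ × H => q.2 • ψ q.1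

@[simp]
lemma evalH_embedMonomial_of (ψ : ℕ → A) (q : ℕ × H) :
    evalH F ψ (embedMonomial F H (FreeMagma.of q)) = q.2 • ψ q.1 := by
  simp [evalH, embedMonomial]

@[simp]
lemma evalH_embedMonomial_mul (ψ : ℕ → A) (u w : FreeMagma (ℕ × H)) :
    evalH F ψ (embedMonomial F H (u * w)) =
      evalH F ψ (embedMonomial F H u) * evalH F ψ (embedMonomial F H w) := by
  rw [map_mul, map_mul]

lemma mem_IdH_iff (f : FreeNA F H) : f ∈ IdH F A H ↔ ∀ ψ : ℕ → A, evalH F ψ f = 0 := by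
  simp only [IdH, Submodule.mem_iInf, LinearMap.mem_ker]
  rfl

lemma evalH_relabelHom (ψ : ℕ → A) (g : ℕ → ℕ) (f : FreeNA F H) :
    evalH F ψ (relabelHom F H g f) = evalH F (ψ ∘ g) f := by
  have : (evalH F ψ).comp (relabelHom F H g) = evalH F (ψ ∘ g) :=
    FreeNonUnitalNonAssocAlgebra.hom_ext (R := F) fun q => by simp [relabelHom, evalH]
  exact DFunLike.congr_fun this f

lemma evalH_embedMonomial_congr (w : FreeMagma (ℕ × H)) {ψ ψ' : ℕ → A}
    (h : ∀ i ∈ (mleaves w).map Prod.fst, ψ i = ψ' i) :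
    evalH F ψ (embedMonomial F H w) = evalH F ψ' (embedMonomial F H w) := by
  induction w with
  | ih1 q => simp [h q.1 (by simp [mleaves])]
  | ih2 u w ihu ihw =>
    simp only [mleaves, Multiset.map_add, Multiset.mem_add] at h
    simp [ihu fun i hi => h i (.inl hi), ihw fun i hi => h i (.inr hi)]

lemma exists_linearMap_evalH_update [SMulCommClass F H A] (w : FreeMagma (ℕ × H)) {j : ℕ}
    (hj : ((mleaves w).map Prod.fst).count j = 1) (ψ : ℕ → A) :
    ∃ L : A →ₗ[F] A, ∀ x, evalH F (Function.update ψ j x) (embedMonomial F H w) = L x := by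
  induction w with
  | ih1 q =>
    have hq : q.1 = j := by
      by_contra hne
      simp [mleaves, Ne.symm hne] at hj
    have := SMulCommClass.symm F H A
    exact ⟨DistribSMul.toLinearMap F A q.2, fun x => by simp [hq, DistribSMul.toLinearMap]⟩
  | ih2 u w ihu ihw =>
    simp only [mleaves, Multiset.map_add, Multiset.count_add] at hj
    have hconst : ∀ w' : FreeMagma (ℕ × H), ((mleaves w').map Prod.fst).count j = 0 →
        ∀ x, evalH F (Function.update ψ j x) (embedMonomial F H w') =
          evalH F ψ (embedMonomial F H w') := fun w' h0 x =>
      evalH_embedMonomial_congr w' fun i hi =>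
        Function.update_of_ne (by rintro rfl; exact Multiset.count_eq_zero.mp h0 hi) _ _
    rcases Nat.eq_zero_or_pos (((mleaves u).map Prod.fst).count j) with hu | hu
    · obtain ⟨L, hL⟩ := ihw (by omega)
      exact ⟨LinearMap.mulLeft F (evalH F ψ (embedMonomial F H u)) ∘ₗ L, fun x => by
        simp [hconst u hu, hL]⟩
    · obtain ⟨L, hL⟩ := ihu (by omega)
      exact ⟨LinearMap.mulRight F (evalH F ψ (embedMonomial F H w)) ∘ₗ L, fun x => by
        simp [hconst w (by omega), hL]⟩

def extendByZero {n : ℕ} (v : Fin n → A) : ℕ → A := fun i => if h : i < n then v ⟨i, h⟩ else 0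

lemma extendByZero_update {n : ℕ} [DecidableEq (Fin n)] (v : Fin n → A) (j : Fin n) (x : A) :
    extendByZero (Function.update v j x) = Function.update (extendByZero v) j x := by
  funext i
  by_cases hi : i < n
  · simp [extendByZero, hi, Function.update_apply, Fin.ext_iff]
  · simp [extendByZero, hi, show i ≠ j from fun h => hi (h ▸ j.isLt)]

lemma extendByZero_comp_permNat {n : ℕ} (v : Fin n → A) (τ : Equiv.Perm (Fin n)) :
    extendByZero v ∘ permNat τ = extendByZero (v ∘ τ) := by
  funext i
  by_cases hi : i < n <;> simp [extendByZero, permNat, hi]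

variable (F H A) in
def polyFun (n : ℕ) : FreeNA F H →ₗ[F] (Fin n → A) → A where
  toFun f v := evalH F (extendByZero v) f
  map_add' f g := by funext v; exact map_add _ f g
  map_smul' c f := by funext v; exact map_smul (evalH F (extendByZero v)) c f

lemma polyFun_apply {n : ℕ} (f : FreeNA F H) (v : Fin n → A) :
    polyFun F H A n f v = evalH F (extendByZero v) f :=
  rfl

lemma evalH_eq_polyFun_of_mem_Wn {n : ℕ} {f : FreeNA F H} (hf : f ∈ Wn F H n) (ψ : ℕ → A) :
    evalH F ψ f = polyFun F H A n f fun i => ψ i := by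
  induction hf using Submodule.span_induction with
  | mem g hg =>
    obtain ⟨w, hw, rfl⟩ := hg
    refine evalH_embedMonomial_congr w fun i hi => ?_
    rw [hw, Multiset.mem_range] at hi
    simp [extendByZero, hi]
  | zero => simp
  | add g g' _ _ hg hg' => simp [hg, hg']
  | smul c g _ hg => simp [hg]

lemma mem_IdH_iff_polyFun_eq_zero {n : ℕ} {f : FreeNA F H} (hf : f ∈ Wn F H n) :
    f ∈ IdH F A H ↔ polyFun F H A n f = 0 := by
  rw [mem_IdH_iff]
  refine ⟨fun h => funext fun v => h _, fun h ψ => ?_⟩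
  rw [evalH_eq_polyFun_of_mem_Wn hf, h, Pi.zero_apply]

lemma exists_multilinearMap_eq_polyFun [SMulCommClass F H A] {n : ℕ} {f : FreeNA F H}
    (hf : f ∈ Wn F H n) :
    ∃ M : MultilinearMap F (fun _ : Fin n => A) A, ⇑M = polyFun F H A n f := by
  induction hf using Submodule.span_induction with
  | mem g hg =>
    obtain ⟨w, hw, rfl⟩ := hg
    have hcount (j : Fin n) : ((mleaves w).map Prod.fst).count (j : ℕ) = 1 := by
      rw [hw, Multiset.count_eq_one_of_mem (Multiset.nodup_range n) (by simp)]
    refine ⟨{ toFun := polyFun F H A n (embedMonomial F H w),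
              map_update_add' := fun v j x y => ?_
              map_update_smul' := fun v j c x => ?_ }, rfl⟩ <;>
    · obtain ⟨L, hL⟩ := exists_linearMap_evalH_update (F := F) w (hcount j) (extendByZero v)
      simp only [polyFun_apply, extendByZero_update, hL, map_add, map_smul]
  | zero => exact ⟨0, by simp⟩
  | add g g' _ _ hg hg' =>
    obtain ⟨M, hM⟩ := hg
    obtain ⟨M', hM'⟩ := hg'
    exact ⟨M + M', by simp [hM, hM']⟩
  | smul c g _ hg =>
    obtain ⟨M, hM⟩ := hg
    exact ⟨c • M, by simp [hM]⟩

end Evaluation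

section Young

variable {F : Type} [Field F] {H : Type}

lemma mleaves_map {α β : Type} (φ : α → β) (w : FreeMagma α) :
    mleaves (FreeMagma.map φ w) = (mleaves w).map φ := by
  induction w with
  | ih1 a => rfl
  | ih2 u w ihu ihw => simp [mleaves, ihu, ihw]

lemma relabelHom_embedMonomial (g : ℕ → ℕ) (w : FreeMagma (ℕ × H)) :
    relabelHom F H g (embedMonomial F H w) =
      embedMonomial F H (FreeMagma.map (fun q : ℕ × H => (g q.1, q.2)) w) := by
  induction w with
  | ih1 q => simp [relabelHom, embedMonomial]
  | ih2 u w ihu ihw => simp only [map_mul, ihu, ihw]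

lemma range_map_permNat {n : ℕ} (τ : Equiv.Perm (Fin n)) :
    (Multiset.range n).map (permNat τ) = Multiset.range n := by
  have hrange : Multiset.range n = (Finset.univ : Finset (Fin n)).val.map Fin.val := by
    rw [← Finset.range_val, ← Nat.Iio_eq_range, ← Fin.map_valEmbedding_univ]; rfl
  have hcomp : permNat τ ∘ Fin.val = Fin.val ∘ τ := funext fun i => by simp [permNat]
  rw [hrange, Multiset.map_map, hcomp, ← Multiset.map_map, Multiset.map_univ_val_equiv]

lemma relabelL_permNat_mem_Wn {n : ℕ} (τ : Equiv.Perm (Fin n)) {f : FreeNA F H}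
    (hf : f ∈ Wn F H n) : relabelL F H (permNat τ) f ∈ Wn F H n := by
  suffices Wn F H n ≤ (Wn F H n).comap (relabelL F H (permNat τ)) from this hf
  refine Submodule.span_le.mpr ?_
  rintro _ ⟨w, hw, rfl⟩
  refine Submodule.subset_span ⟨_, ?_, relabelHom_embedMonomial _ w⟩
  rw [mleaves_map, Multiset.map_map]
  change (mleaves w).map (permNat τ ∘ Prod.fst) = _
  rw [← Multiset.map_map, hw, range_map_permNat]

lemma youngE_mem_Wn {n : ℕ} (Tb : Fin n → ℕ × ℕ) {f : FreeNA F H} (hf : f ∈ Wn F H n) :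
    youngE F H Tb f ∈ Wn F H n := by
  simp only [youngE, LinearMap.sum_apply, LinearMap.smul_apply]
  exact Submodule.sum_mem _ fun π _ => Submodule.sum_mem _ fun σ _ =>
    Submodule.smul_mem _ _ (relabelL_permNat_mem_Wn _ hf)

lemma rowStab_mul {n : ℕ} {Tb : Fin n → ℕ × ℕ} {π π' : Equiv.Perm (Fin n)}
    (hπ : π ∈ rowStab Tb) (hπ' : π' ∈ rowStab Tb) : π * π' ∈ rowStab Tb := by
  simp only [rowStab, Finset.mem_filter, Finset.mem_univ, true_and] at *
  exact fun m => (hπ (π' m)).trans (hπ' m)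

lemma rowStab_inv {n : ℕ} {Tb : Fin n → ℕ × ℕ} {π : Equiv.Perm (Fin n)}
    (hπ : π ∈ rowStab Tb) : π⁻¹ ∈ rowStab Tb := by
  simp only [rowStab, Finset.mem_filter, Finset.mem_univ, true_and] at *
  exact fun m => by simpa using (hπ (π⁻¹ m)).symm

lemma colStab_mul {n : ℕ} {Tb : Fin n → ℕ × ℕ} {σ σ' : Equiv.Perm (Fin n)}
    (hσ : σ ∈ colStab Tb) (hσ' : σ' ∈ colStab Tb) : σ * σ' ∈ colStab Tb := by
  simp only [colStab, Finset.mem_filter, Finset.mem_univ, true_and] at *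
  exact fun m => (hσ (σ' m)).trans (hσ' m)

lemma swap_mem_colStab {n : ℕ} {Tb : Fin n → ℕ × ℕ} {a b : Fin n} (h : (Tb a).2 = (Tb b).2) :
    Equiv.swap a b ∈ colStab Tb := by
  simp only [colStab, Finset.mem_filter, Finset.mem_univ, true_and]
  intro m
  rcases eq_or_ne m a with rfl | hma
  · simp [h]
  rcases eq_or_ne m b with rfl | hmb
  · simp [h]
  · rw [Equiv.swap_apply_of_ne_of_ne hma hmb]

variable [Semiring H] {A : Type} [NonUnitalNonAssocSemiring A] [Module F A] [SMulCommClass F A A]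
  [IsScalarTower F A A] [Module H A]

lemma polyFun_relabelL_permNat {n : ℕ} (τ : Equiv.Perm (Fin n)) (f : FreeNA F H) (v : Fin n → A) :
    polyFun F H A n (relabelL F H (permNat τ) f) v = polyFun F H A n f (v ∘ τ) := by
  rw [polyFun_apply, polyFun_apply, ← extendByZero_comp_permNat]
  exact evalH_relabelHom _ _ f

lemma polyFun_youngE {n : ℕ} (Tb : Fin n → ℕ × ℕ) (f : FreeNA F H) (v : Fin n → A) :
    polyFun F H A n (youngE F H Tb f) v = ∑ π ∈ rowStab Tb, ∑ σ ∈ colStab Tb,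
      ((Equiv.Perm.sign σ : ℤ) : F) • polyFun F H A n f (v ∘ ⇑(π * σ)) := by
  simp only [youngE, LinearMap.sum_apply, LinearMap.smul_apply, map_sum,
    map_smul, Finset.sum_apply, Pi.smul_apply, polyFun_relabelL_permNat]

lemma polyFun_youngE_comp_rowStab {n : ℕ} (Tb : Fin n → ℕ × ℕ) (f : FreeNA F H)
    {ρ : Equiv.Perm (Fin n)} (hρ : ρ ∈ rowStab Tb) (v : Fin n → A) :
    polyFun F H A n (youngE F H Tb f) (v ∘ ρ) = polyFun F H A n (youngE F H Tb f) v := by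
  rw [polyFun_youngE, polyFun_youngE]
  refine Finset.sum_nbij' (ρ * ·) (ρ⁻¹ * ·) (fun π hπ => rowStab_mul hρ hπ)
    (fun π hπ => rowStab_mul (rowStab_inv hρ) hπ) (fun π _ => by simp) (fun π _ => by simp)
    fun π _ => ?_
  simp only [mul_assoc, Equiv.Perm.coe_mul, Function.comp_assoc]

end Young

section Multiplicity

open Module

variable {F : Type} [Field F] {H : Type} [Semiring H] {A : Type} [NonUnitalNonAssocRing A]
  [Module F A] [SMulCommClass F A A] [IsScalarTower F A A] [Module H A]

lemma mult_eq_finrank_map_polyFun {n : ℕ} (p : Nat.Partition n) :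
    mult F H (IdH F A H) p =
      finrank F (((Wn F H n).map (youngE F H (canonT p))).map (polyFun F H A n)) := by
  refine finrank_map_eq_of_forall_eq_zero_iff fun x hx => ?_
  obtain ⟨f, hf, rfl⟩ := hx
  rw [Submodule.mkQ_apply, Submodule.Quotient.mk_eq_zero]
  exact mem_IdH_iff_polyFun_eq_zero (youngE_mem_Wn _ hf)

variable [SMulCommClass F H A] [FiniteDimensional F A]

/-- The column antisymmetrizer alternates over the first column, which has more than `dim A`
cells. -/
lemma mult_eq_zero_of_finrank_lt_numParts {n : ℕ} (p : Nat.Partition n)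
    (hp : finrank F A < numParts p) : mult F H (IdH F A H) p = 0 := by
  suffices ((Wn F H n).map (youngE F H (canonT p))).map (polyFun F H A n) = ⊥ by
    rw [mult_eq_finrank_map_polyFun, this, finrank_bot]
  refine (Submodule.eq_bot_iff _).mpr ?_
  rintro _ ⟨_, ⟨f, hf, rfl⟩, rfl⟩
  obtain ⟨M, hM⟩ := exists_multilinearMap_eq_polyFun (A := A) hf
  funext v
  rw [polyFun_youngE, Pi.zero_apply]
  refine Finset.sum_eq_zero fun π _ => ?_
  rw [← hM]
  refine sum_sign_smul_multilinearMap_eq_zero M (finBasis F A)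
    (C := {m : Fin n | (canonT p m).2 = 0}) ?_ (fun a ha b hb σ hσ => ?_) (v ∘ π)
  · simpa using hp.trans_le (numParts_le_card_canonT_snd_eq_zero p)
  · simp only [Finset.mem_filter, Finset.mem_univ, true_and] at ha hb
    exact colStab_mul (swap_mem_colStab (ha.trans hb.symm)) hσ

lemma mult_le_of_numParts_le {n : ℕ} (p : Nat.Partition n)
    (hp : numParts p ≤ finrank F A) :
    mult F H (IdH F A H) p ≤ (n + 1) ^ (finrank F A * finrank F A) * finrank F A := by
  rw [mult_eq_finrank_map_polyFun]
  let row (m : Fin n) : Fin (finrank F A) := ⟨(canonT p m).1, (canonT_fst_lt p m).trans_le hp⟩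
  have hrow {ρ : Equiv.Perm (Fin n)} (hρ : row ∘ ρ = row) : ρ ∈ rowStab (canonT p) := by
    simp only [rowStab, Finset.mem_filter, Finset.mem_univ, true_and]
    exact fun m => congrArg Fin.val (congrFun hρ m)
  simpa using finrank_le_of_multilinear_of_invariant row _
    (by
      rintro _ ⟨_, ⟨f, hf, rfl⟩, rfl⟩
      exact exists_multilinearMap_eq_polyFun (youngE_mem_Wn _ hf))
    (by
      rintro _ ⟨_, ⟨f, hf, rfl⟩, rfl⟩ ρ hρ v
      exact polyFun_youngE_comp_rowStab _ f (hrow hρ) v)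

end Multiplicity

end PIExp

theorem H_colength_polynomial_bound_general
    (F H A : Type) [Field F] [Ring H]
    [NonUnitalNonAssocRing A] [Module F A] [SMulCommClass F A A] [IsScalarTower F A A]
    [Module H A] [SMulCommClass F H A] [FiniteDimensional F A]
    (n : ℕ) :
    PIExp.colength F H (PIExp.IdH F A H) n ≤
      Module.finrank F A * (n + 1) ^ (Module.finrank F A ^ 2 + Module.finrank F A) := by
  open PIExp in
  set d := Module.finrank F A
  have hmult (p : Nat.Partition n) :
      mult F H (IdH F A H) p ≤ if numParts p ≤ d then (n + 1) ^ (d * d) * d else 0 := by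
    split_ifs with hp
    · exact mult_le_of_numParts_le p hp
    · exact (mult_eq_zero_of_finrank_lt_numParts p (not_le.mp hp)).le
  calc colength F H (IdH F A H) n = ∑ p : Nat.Partition n, mult F H (IdH F A H) p := rfl
    _ ≤ ∑ p : Nat.Partition n, if numParts p ≤ d then (n + 1) ^ (d * d) * d else 0 :=
        Finset.sum_le_sum fun p _ => hmult p
    _ = #{p : Nat.Partition n | numParts p ≤ d} * ((n + 1) ^ (d * d) * d) := by
        rw [← Finset.sum_filter, Finset.sum_const, smul_eq_mul]
    _ ≤ (n + 1) ^ d * ((n + 1) ^ (d * d) * d) :=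
        Nat.mul_le_mul_right _ (card_filter_numParts_le n d)
    _ = d * (n + 1) ^ (d ^ 2 + d) := by ring

/-- **Theorem (polynomial upper bound for H-colengths).**
If `A` is a finite-dimensional algebra with a generalized `H`-action over a field of
characteristic `0`, then `ℓ_n^H(A) ≤ (dim A)(n+1)^{(dim A)² + dim A}` for all `n`. -/
theorem H_colength_polynomial_bound
    (F H A : Type) [Field F] [CharZero F] [Ring H] [Algebra F H]
    [NonUnitalNonAssocRing A] [Module F A] [SMulCommClass F A A] [IsScalarTower F A A]
    [Module H A] [IsScalarTower F H A] [SMulCommClass F H A] [FiniteDimensional F A]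
    (hact : PIExp.IsGenAction H A) (n : ℕ) :
    PIExp.colength F H (PIExp.IdH F A H) n ≤
      Module.finrank F A * (n + 1) ^ (Module.finrank F A ^ 2 + Module.finrank F A) :=
  H_colength_polynomial_bound_general F H A n
end
end

section
/- Let A be a finite-dimensional algebra with a generalized H-action over a field F, with basis a_1, …, a_s, fix k ∈ ℕ, and define ξ_j := Σ_{i=1}^s a_i ⊗ ξ_{ij} in A ⊗ F[ξ_{ij} : 1 ≤ i ≤ s, 1 ≤ j ≤ k] (with generalized H-action h(a ⊗ f) = (ha) ⊗ f). Let R_{kn} be the F-linear span of all products (h_1 ξ_{i_1})⋯(h_n ξ_{i_n}) with h_j ∈ H, 1 ≤ i_j ≤ k, over all bracket arrangements. Then dim R_{kn} ≤ (dim A)·(n+1)^{k · dim A} for all n ∈ ℕ. -/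
open Filter Finset Submodule

noncomputable section

/-!
Each generic element `ξ_j = Σ_i a_i ⊗ ξ_{ij}`, and every `h ξ_j`, lies in `A ⊗ P₁`, where `P_m`
is the space of polynomials of degree at most `m` in each variable `ξ_{ij}`. Since
`(A ⊗ P_m)(A ⊗ P_{m'}) ⊆ A ⊗ P_{m+m'}`, every product of `n` such elements, however bracketed,
lies in `A ⊗ P_n`, whose dimension is `s (n+1)^{sk}`.
-/

open scoped TensorProduct
open Module

namespace MvPolynomial

variable {σ R : Type*}

lemma restrictDegree_mul_le [CommSemiring R] (m m' : ℕ) :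
    restrictDegree σ R m * restrictDegree σ R m' ≤ restrictDegree σ R (m + m') := by
  rw [restrictDegree, restrictDegree, ← restrictSupport_add]
  refine restrictSupport_mono R ?_
  rintro _ ⟨d, hd, d', hd', rfl⟩ i
  exact add_le_add (hd i) (hd' i)

lemma X_mem_restrictDegree_one [CommSemiring R] (i : σ) : X i ∈ restrictDegree σ R 1 := by
  classical
  rw [X, restrictDegree, monomial_mem_restrictSupport]
  left
  intro j
  rw [Finsupp.single_apply]
  split_ifs <;> omega

def boundedExponentsEquiv [Fintype σ] (m : ℕ) :
    {d : σ →₀ ℕ | ∀ i, d i ≤ m} ≃ (σ → Fin (m + 1)) where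
  toFun d i := ⟨d.1 i, Nat.lt_succ_of_le (d.2 i)⟩
  invFun e := ⟨Finsupp.equivFunOnFinite.symm fun i => e i, fun i => Nat.le_of_lt_succ (e i).2⟩
  left_inv d := by ext; simp
  right_inv e := by ext; simp

lemma finrank_restrictDegree [Fintype σ] [CommRing R] [Nontrivial R] (m : ℕ) :
    finrank R (restrictDegree σ R m) = (m + 1) ^ Fintype.card σ := by
  classical
  rw [restrictDegree, finrank_eq_nat_card_basis (basisRestrictSupport R _),
    Nat.card_congr (boundedExponentsEquiv m), Nat.card_eq_fintype_card, Fintype.card_fun,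
    Fintype.card_fin]

instance [Fintype σ] [CommRing R] (m : ℕ) : Module.Finite R (restrictDegree σ R m) :=
  have := Finite.of_equiv _ (boundedExponentsEquiv (σ := σ) m).symm
  .of_basis (basisRestrictSupport R {d : σ →₀ ℕ | ∀ i, d i ≤ m})

end MvPolynomial

namespace FreeMagma

lemma lift_mem_of_mul_mem {α : Type} {M S : Type*} [Mul M] [SetLike S M] (D : ℕ → S)
    (hmul : ∀ m m' x y, x ∈ D m → y ∈ D m' → x * y ∈ D (m + m'))
    (f : α → M) (hf : ∀ a, f a ∈ D 1) (w : FreeMagma α) :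
    lift f w ∈ D (Multiset.card (PIExp.mleaves w)) := by
  induction w with
  | ih1 a => exact hf a
  | ih2 x y hx hy =>
    change _ * _ ∈ D (Multiset.card (PIExp.mleaves x + PIExp.mleaves y))
    rw [Multiset.card_add]
    exact hmul _ _ _ _ hx hy

end FreeMagma

namespace TensorProduct

lemma range_lTensor_subtype_eq_span {R A B : Type*} [CommSemiring R] [AddCommMonoid A]
    [Module R A] [AddCommMonoid B] [Module R B] (N : Submodule R B) :
    LinearMap.range (N.subtype.lTensor A) =
      Submodule.span R {t | ∃ (a : A) (n : N), a ⊗ₜ (n : B) = t} := by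
  rw [LinearMap.lTensor, range_map_eq_span_tmul]
  rfl

lemma tmul_mem_range_lTensor_subtype {R A B : Type*} [CommSemiring R] [AddCommMonoid A]
    [Module R A] [AddCommMonoid B] [Module R B] {N : Submodule R B} (a : A) {n : B}
    (hn : n ∈ N) :
    a ⊗ₜ[R] n ∈ LinearMap.range (N.subtype.lTensor A) :=
  ⟨a ⊗ₜ ⟨n, hn⟩, rfl⟩

lemma smul_mem_range_lTensor {R H A M B : Type*} [CommSemiring R] [Semiring H]
    [AddCommMonoid A] [Module R A] [Module H A] [SMulCommClass R H A] [AddCommMonoid M] [Module R M]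
    [AddCommMonoid B] [Module R B] (f : M →ₗ[R] B) (h : H) {x : A ⊗[R] B}
    (hx : x ∈ LinearMap.range (f.lTensor A)) : h • x ∈ LinearMap.range (f.lTensor A) := by
  obtain ⟨y, rfl⟩ := hx
  induction y using TensorProduct.induction_on with
  | zero => simp
  | tmul a m => exact ⟨(h • a) ⊗ₜ m, by simp [smul_tmul']⟩
  | add y z hy hz => rw [map_add, smul_add]; exact add_mem hy hz

variable {R A B : Type*} [CommSemiring R] [NonUnitalNonAssocSemiring A] [Module R A]
  [SMulCommClass R A A] [IsScalarTower R A A] [Semiring B] [Algebra R B]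

lemma mul_mem_range_lTensor_subtype {M N P : Submodule R B} {x y : A ⊗[R] B}
    (hx : x ∈ LinearMap.range (M.subtype.lTensor A))
    (hy : y ∈ LinearMap.range (N.subtype.lTensor A)) (hMN : M * N ≤ P) :
    x * y ∈ LinearMap.range (P.subtype.lTensor A) := by
  rw [range_lTensor_subtype_eq_span] at hx hy ⊢
  have hxy := Submodule.apply_mem_map₂ (LinearMap.mul R (A ⊗[R] B)) hx hy
  rw [Submodule.map₂_span_span] at hxy
  refine Submodule.span_le.mpr ?_ hxy
  rintro _ ⟨_, ⟨a, m, rfl⟩, _, ⟨a', n, rfl⟩, rfl⟩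
  refine Submodule.subset_span ⟨a * a', ⟨m * n, hMN (Submodule.mul_mem_mul m.2 n.2)⟩, ?_⟩
  exact (Algebra.TensorProduct.tmul_mul_tmul a a' (m : B) n).symm

end TensorProduct

open scoped TensorProduct in
theorem generic_products_span_dim_bound_general
    (F H A : Type) [Field F] [Ring H]
    [NonUnitalNonAssocRing A] [Module F A] [SMulCommClass F A A] [IsScalarTower F A A]
    [Module H A] [SMulCommClass F H A]
    (s : ℕ) (b : Module.Basis (Fin s) F A) (k n : ℕ) :
    Module.finrank F ↥(Submodule.span F
      {x : A ⊗[F] MvPolynomial (Fin s × Fin k) F |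
        ∃ w : FreeMagma (H × Fin k),
          Multiset.card (PIExp.mleaves w) = n ∧
          x = FreeMagma.lift (fun q : H × Fin k =>
            q.1 • ∑ i : Fin s, b i ⊗ₜ[F]
              (MvPolynomial.X (i, q.2) : MvPolynomial (Fin s × Fin k) F)) w}) ≤
      s * (n + 1) ^ (k * s) := by
  have := Module.Finite.of_basis b
  let D : ℕ → Submodule F (A ⊗[F] MvPolynomial (Fin s × Fin k) F) := fun m =>
    LinearMap.range ((MvPolynomial.restrictDegree (Fin s × Fin k) F m).subtype.lTensor A)
  have hgen : ∀ q : H × Fin k, q.1 • ∑ i : Fin s, b i ⊗ₜ[F]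
      (MvPolynomial.X (i, q.2) : MvPolynomial (Fin s × Fin k) F) ∈ D 1 := fun q =>
    TensorProduct.smul_mem_range_lTensor _ q.1 <| Submodule.sum_mem _ fun i _ =>
      TensorProduct.tmul_mem_range_lTensor_subtype _ (MvPolynomial.X_mem_restrictDegree_one _)
  have hmul : ∀ m m' (x y : A ⊗[F] MvPolynomial (Fin s × Fin k) F),
      x ∈ D m → y ∈ D m' → x * y ∈ D (m + m') := fun m m' _ _ hx hy =>
    TensorProduct.mul_mem_range_lTensor_subtype hx hy (MvPolynomial.restrictDegree_mul_le m m')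
  calc _ ≤ Module.finrank F (D n) := Submodule.finrank_mono <| Submodule.span_le.mpr <| by
        rintro _ ⟨w, rfl, rfl⟩
        exact FreeMagma.lift_mem_of_mul_mem D hmul _ hgen w
    _ ≤ Module.finrank F (A ⊗[F] MvPolynomial.restrictDegree (Fin s × Fin k) F n) :=
      LinearMap.finrank_range_le _
    _ = s * (n + 1) ^ (k * s) := by
      rw [Module.finrank_tensorProduct, Module.finrank_eq_card_basis b,
        MvPolynomial.finrank_restrictDegree, Fintype.card_prod, Fintype.card_fin, Fintype.card_fin,
        mul_comm k s]

open scoped TensorProduct in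
/-- **Lemma (dimension bound for the span of products of generic elements).**
With `ξ_j = Σ_i a_i ⊗ ξ_{ij} ∈ A ⊗ F[ξ_{ij}]`, the span `R_{kn}` of all products
`(h_1 ξ_{i_1}) ⋯ (h_n ξ_{i_n})` (over all bracket arrangements) has dimension at most
`(dim A)(n+1)^{k · dim A}`. -/
theorem generic_products_span_dim_bound
    (F H A : Type) [Field F] [Ring H] [Algebra F H]
    [NonUnitalNonAssocRing A] [Module F A] [SMulCommClass F A A] [IsScalarTower F A A]
    [Module H A] [IsScalarTower F H A] [SMulCommClass F H A]
    (s : ℕ) (b : Module.Basis (Fin s) F A) (k n : ℕ) :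
    Module.finrank F ↥(Submodule.span F
      {x : A ⊗[F] MvPolynomial (Fin s × Fin k) F |
        ∃ w : FreeMagma (H × Fin k),
          Multiset.card (PIExp.mleaves w) = n ∧
          x = FreeMagma.lift (fun q : H × Fin k =>
            q.1 • ∑ i : Fin s, b i ⊗ₜ[F]
              (MvPolynomial.X (i, q.2) : MvPolynomial (Fin s × Fin k) F)) w}) ≤
      s * (n + 1) ^ (k * s) :=
  generic_products_span_dim_bound_general F H A s b k n
end
end
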